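/- Let F = (ℝ^m; f_1, …, f_N) be an affine IFS with attractor A, and suppose K_1 is a convex body and t a positive integer with F^{∘t}(K_1) ⊆ int(K_1). Writing f_n(x) = L_n x + a_n, the centrally symmetric convex body K_2 := Σ_{k=0}^{t−1} (conv(F^{∘k}(K_1)) − conv(F^{∘k}(K_1))) (Minkowski sum) satisfies L_n(K_2) ⊆ int(K_2) for every n. -/
import Mathlib


open scoped Pointwise

/-- The Hutchinson set map `F(B) = ⋃ₙ fₙ(B)` of an IFS. -/
def ifsSetMap {E : Type*} {N : ℕ} (f : Fin N → E → E) (B : Set E) : Set E :=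
  ⋃ n : Fin N, f n '' B

theorem symmetrized_body_linear_parts_contract (m N : ℕ)
    (f : Fin N → EuclideanSpace ℝ (Fin m) → EuclideanSpace ℝ (Fin m))
    (L : Fin N → EuclideanSpace ℝ (Fin m) →ₗ[ℝ] EuclideanSpace ℝ (Fin m))
    (a : Fin N → EuclideanSpace ℝ (Fin m))
    (hf : ∀ n x, f n x = L n x + a n)
    (A : Set (EuclideanSpace ℝ (Fin m))) (hA_ne : A.Nonempty) (hA_c : IsCompact A)
    (hA_fix : A = ifsSetMap f A)
    (hA_attr : ∀ B : Set (EuclideanSpace ℝ (Fin m)), B.Nonempty → IsCompact B →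
      Filter.Tendsto (fun k => Metric.hausdorffDist ((ifsSetMap f)^[k] B) A)
        Filter.atTop (nhds 0))
    (K₁ : Set (EuclideanSpace ℝ (Fin m)))
    (hK₁c : IsCompact K₁) (hK₁conv : Convex ℝ K₁) (hK₁int : (interior K₁).Nonempty)
    (t : ℕ) (ht : 0 < t)
    (hFt : (ifsSetMap f)^[t] K₁ ⊆ interior K₁) :
    ∀ n : Fin N,
      (L n) '' (∑ k ∈ Finset.range t,
          (convexHull ℝ ((ifsSetMap f)^[k] K₁) - convexHull ℝ ((ifsSetMap f)^[k] K₁)))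
        ⊆ interior (∑ k ∈ Finset.range t,
          (convexHull ℝ ((ifsSetMap f)^[k] K₁) - convexHull ℝ ((ifsSetMap f)^[k] K₁))) := by
  intro n
  set C : ℕ → Set (EuclideanSpace ℝ (Fin m)) :=
    fun k => convexHull ℝ ((ifsSetMap f)^[k] K₁) with hC
  set D : ℕ → Set (EuclideanSpace ℝ (Fin m)) := fun k => C k - C k with hD
  -- the affine map equal to f n
  set g : EuclideanSpace ℝ (Fin m) →ᵃ[ℝ] EuclideanSpace ℝ (Fin m) :=
    { toFun := fun x => L n x + a n
      linear := L n
      map_vadd' := by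
        intro p v
        simp only [vadd_eq_add, map_add]
        abel } with hg
  have hfg : f n = g := by
    funext x; rw [hf n x]; rfl
  -- f n maps C k into C (k+1)
  have hCstep : ∀ k, f n '' C k ⊆ C (k + 1) := by
    intro k
    have h1 : f n '' ((ifsSetMap f)^[k] K₁) ⊆ (ifsSetMap f)^[k + 1] K₁ := by
      rw [Function.iterate_succ_apply']
      exact Set.subset_iUnion (fun i : Fin N => f i '' ((ifsSetMap f)^[k] K₁)) n
    calc f n '' C k = convexHull ℝ (f n '' ((ifsSetMap f)^[k] K₁)) := by
          rw [hfg]; exact g.image_convexHull _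
      _ ⊆ C (k + 1) := convexHull_mono h1
  -- L n maps D k into D (k+1)
  have hDstep : ∀ k, L n '' D k ⊆ D (k + 1) := by
    intro k x hx
    obtain ⟨y, hy, rfl⟩ := hx
    obtain ⟨u, hu, v, hv, rfl⟩ := hy
    have heq : L n (u - v) = f n u - f n v := by
      rw [hf n u, hf n v, map_sub]; abel
    rw [heq]
    exact Set.sub_mem_sub (hCstep k ⟨u, hu, rfl⟩) (hCstep k ⟨v, hv, rfl⟩)
  -- image of a sum
  have hsum : ∀ s : ℕ, L n '' (∑ k ∈ Finset.range s, D k)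
      ⊆ ∑ k ∈ Finset.range s, D (k + 1) := by
    intro s
    induction s with
    | zero =>
        simp only [Finset.range_zero, Finset.sum_empty]
        intro x hx
        obtain ⟨y, hy, rfl⟩ := hx
        simp only [Set.mem_zero] at hy
        simp [hy]
    | succ s ih =>
        rw [Finset.sum_range_succ, Finset.sum_range_succ, Set.image_add]
        exact Set.add_subset_add ih (hDstep s)
  -- D t ⊆ interior (D 0)
  have hC0 : C 0 = K₁ := by
    simp only [hC, Function.iterate_zero, id_eq]
    exact hK₁conv.convexHull_eq
  have hCt : C t ⊆ interior K₁ := convexHull_min hFt hK₁conv.interior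
  have hDt : D t ⊆ interior (D 0) := by
    have hsub : D t ⊆ interior K₁ - interior K₁ := Set.sub_subset_sub hCt hCt
    refine hsub.trans (interior_maximal ?_ ?_)
    · show interior K₁ - interior K₁ ⊆ C 0 - C 0
      rw [hC0]
      exact Set.sub_subset_sub interior_subset interior_subset
    · rw [sub_eq_add_neg]
      exact IsOpen.add_left isOpen_interior.neg
  -- assemble
  obtain ⟨s, rfl⟩ : ∃ s, t = s + 1 := ⟨t - 1, (Nat.succ_pred_eq_of_pos ht).symm⟩
  calc L n '' (∑ k ∈ Finset.range (s + 1), D k)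
      ⊆ ∑ k ∈ Finset.range (s + 1), D (k + 1) := hsum (s + 1)
    _ = (∑ k ∈ Finset.range s, D (k + 1)) + D (s + 1) := Finset.sum_range_succ _ s
    _ ⊆ (∑ k ∈ Finset.range s, D (k + 1)) + interior (D 0) :=
        Set.add_subset_add_left hDt
    _ ⊆ interior ((∑ k ∈ Finset.range s, D (k + 1)) + D 0) :=
        interior_maximal (Set.add_subset_add_left interior_subset)
          (IsOpen.add_left isOpen_interior)
    _ = interior (∑ k ∈ Finset.range (s + 1), D k) := by
        rw [Finset.sum_range_succ']
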